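/- arXiv:1709.06068 — 2 statements merged into one kernel-verified Lean document; each statement's English description precedes it below -/
import Mathlib

section
/- If n+1 is an Hadamard number, then ξ_n = n; i.e., there exists a simplex S ⊆ Q_n = [0,1]^n with Q_n ⊆ nS, and for every nondegenerate simplex T ⊆ Q_n one has ξ(T) ≥ n. -/
/-!
Write `λ_j` for the barycentric coordinates of a simplex `S` with vertices `v_j` and centroid
`c`. Since `λ_j (c + σ (y - c)) = (1 - σ) / (n + 1) + σ λ_j y`, for `σ > 0` the inclusion
`Q_n ⊆ σS` says exactly that `(1 - σ) / (n + 1) ≤ λ_j` on `Q_n` for every `j`.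

Lower bound: the minimum of the affine function `λ_j` on `Q_n` is
`λ_j 0 + ∑_i min (∂_i λ_j) 0`. For each `i` we have `∑_j ∂_i λ_j = 0` and
`∑_j ∂_i λ_j * v_j i = 1`, so if all vertices lie in `Q_n` then `∑_j min (∂_i λ_j) 0 ≤ -1`.
Summing the inequalities over `j` gives `1 - σ ≤ ∑_j min_{Q_n} λ_j ≤ 1 - n`.

Upper bound: normalise the Hadamard matrix so that its first column is all ones and take the
vertices `v_j i = (1 + G j (i + 1)) / 2 ∈ {0, 1}`. As `Gᵀ G = (n + 1) I`, the barycentric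
coordinates are `λ_j x = (1 + ∑_i G j (i + 1) * (2 x_i - 1)) / (n + 1)`, which is at least
`(1 - n) / (n + 1)` on `Q_n`: this is the inclusion `Q_n ⊆ nS`.
-/

open Finset MeasureTheory

/-- The unit cube `[0,1]^n` in `ℝ^n`. -/
def unitCube (n : ℕ) : Set (Fin n → ℝ) := {x | ∀ i, 0 ≤ x i ∧ x i ≤ 1}

/-- The set of vertices of the unit cube, i.e. `{0,1}^n`. -/
def cubeVerts (n : ℕ) : Set (Fin n → ℝ) := {x | ∀ i, x i = 0 ∨ x i = 1}

/-- The (solid) simplex spanned by `n+1` points. -/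
def simplexSet {n : ℕ} (v : Fin (n + 1) → (Fin n → ℝ)) : Set (Fin n → ℝ) :=
  convexHull ℝ (Set.range v)

/-- The centroid (center of gravity) of the simplex with vertices `v`. -/
noncomputable def simplexCentroid {n : ℕ} (v : Fin (n + 1) → (Fin n → ℝ)) : Fin n → ℝ :=
  ((n : ℝ) + 1)⁻¹ • ∑ j, v j

/-- The homothety of the simplex with vertices `v`, with center the centroid and ratio `σ`. -/
noncomputable def homSimplex {n : ℕ} (v : Fin (n + 1) → (Fin n → ℝ)) (σ : ℝ) : Set (Fin n → ℝ) :=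
  (fun x => simplexCentroid v + σ • (x - simplexCentroid v)) '' simplexSet v

/-- `ξ(S) = min {σ ≥ 1 : Q_n ⊆ σS}`. -/
noncomputable def xiVal {n : ℕ} (v : Fin (n + 1) → (Fin n → ℝ)) : ℝ :=
  sInf {σ : ℝ | 1 ≤ σ ∧ unitCube n ⊆ homSimplex v σ}

/-- A function `ℝ^n → ℝ` is an affine polynomial of degree at most 1. -/
def IsAffinePoly {n : ℕ} (f : (Fin n → ℝ) → ℝ) : Prop :=
  ∃ a : Fin n → ℝ, ∃ b : ℝ, ∀ x, f x = ∑ i, a i * x i + b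

/-- `lam` is the family of basic Lagrange polynomials of the simplex with vertices `v`. -/
def IsLagrangeBasis {n : ℕ} (v : Fin (n + 1) → (Fin n → ℝ))
    (lam : Fin (n + 1) → (Fin n → ℝ) → ℝ) : Prop :=
  (∀ j, IsAffinePoly (lam j)) ∧ ∀ j k, lam j (v k) = if j = k then 1 else 0

/-- The `i`-th axial diameter of a set `S ⊆ ℝ^n`: the supremum of lengths of segments
in `S` parallel to the `i`-th coordinate axis. -/
noncomputable def axialDiam {n : ℕ} (S : Set (Fin n → ℝ)) (i : Fin n) : ℝ :=
  sSup {t : ℝ | ∃ x ∈ S, ∃ y ∈ S, (∀ k, k ≠ i → x k = y k) ∧ y i - x i = t}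

namespace AffineBasis

variable {ι k V : Type*} [Fintype ι] [Ring k] [AddCommGroup V] [Module k V]

theorem sum_coord_linear_apply_eq_zero (b : AffineBasis ι k V) (u : V) :
    ∑ i, (b.coord i).linear u = 0 := by
  simp only [AffineMap.decomp', Pi.sub_apply, Finset.sum_sub_distrib, b.sum_coord_apply_eq_one,
    sub_self]

theorem sum_coord_linear_smul_eq_self (b : AffineBasis ι k V) (u : V) :
    ∑ i, (b.coord i).linear u • b i = u := by
  simp only [AffineMap.decomp', Pi.sub_apply, sub_smul, Finset.sum_sub_distrib,
    b.linear_combination_coord_eq_self, sub_zero]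

end AffineBasis

theorem affineIndependent_of_forall_eq_sum_smul {ι k V : Type*} [Fintype ι] [Field k]
    [AddCommGroup V] [Module k V] [FiniteDimensional k V] {p : ι → V}
    (hcard : Fintype.card ι = Module.finrank k V + 1)
    (hp : ∀ x, ∃ μ : ι → k, ∑ i, μ i = 1 ∧ ∑ i, μ i • p i = x) :
    AffineIndependent k p := by
  have hspan : affineSpan k (Set.range p) = ⊤ := by
    refine eq_top_iff.2 fun x _ => ?_
    obtain ⟨μ, hμ, rfl⟩ := hp x
    rw [← Finset.univ.affineCombination_eq_linear_combination p μ hμ]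
    exact affineCombination_mem_affineSpan hμ p
  rw [affineIndependent_iff_finrank_vectorSpan_eq k p hcard,
    AffineSubspace.vectorSpan_eq_top_of_affineSpan_eq_top k V V hspan, finrank_top]

theorem AffineMap.apply_eq_add_sum_mul {n : ℕ} (f : (Fin n → ℝ) →ᵃ[ℝ] ℝ) (x : Fin n → ℝ) :
    f x = f 0 + ∑ i, x i * f.linear (Pi.single i 1) := by
  rw [← sub_eq_iff_eq_add', ← Pi.sub_apply (⇑f) (fun _ => f 0), ← AffineMap.decomp',
    LinearMap.pi_apply_eq_sum_univ]
  refine Finset.sum_congr rfl fun i _ => ?_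
  rw [smul_eq_mul]
  congr 3
  ext j
  simp [Pi.single_apply, eq_comm]

theorem convex_unitCube (n : ℕ) : Convex ℝ (unitCube n) := by
  have : unitCube n = Set.Icc 0 1 := by
    ext x; simp [unitCube, Pi.le_def, forall_and]
  exact this ▸ convex_Icc 0 1

theorem AffineMap.isLeast_image_unitCube {n : ℕ} (f : (Fin n → ℝ) →ᵃ[ℝ] ℝ) :
    IsLeast (f '' unitCube n) (f 0 + ∑ i, min (f.linear (Pi.single i 1)) 0) := by
  refine ⟨⟨fun i => if f.linear (Pi.single i 1) ≤ 0 then 1 else 0, fun i => ?_, ?_⟩, ?_⟩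
  · dsimp only
    split_ifs <;> norm_num
  · rw [f.apply_eq_add_sum_mul]
    congr 1
    refine Finset.sum_congr rfl fun i _ => ?_
    split_ifs with h
    · rw [one_mul, min_eq_left h]
    · rw [zero_mul, min_eq_right (not_le.1 h).le]
  · rintro _ ⟨x, hx, rfl⟩
    rw [f.apply_eq_add_sum_mul x]
    refine (add_le_add_iff_left _).2 (Finset.sum_le_sum fun i _ => ?_)
    obtain ⟨h0, h1⟩ := hx i
    rcases le_total (f.linear (Pi.single i 1)) 0 with h | h
    · rw [min_eq_left h]; nlinarith
    · rw [min_eq_right h]; positivity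

section Homothety

variable {n : ℕ}

theorem simplexCentroid_eq_centroid (v : Fin (n + 1) → (Fin n → ℝ)) :
    simplexCentroid v = Finset.univ.centroid ℝ v := by
  rw [Finset.centroid_def, Finset.affineCombination_eq_linear_combination _ _ _
      (Finset.univ.sum_centroidWeights_eq_one_of_nonempty ℝ Finset.univ_nonempty),
    simplexCentroid, Finset.smul_sum]
  simp [Finset.centroidWeights]

theorem mem_homSimplex_of_sum_smul_eq (v : Fin (n + 1) → (Fin n → ℝ)) {σ : ℝ} (hσ : 0 < σ)
    {x : Fin n → ℝ} (μ : Fin (n + 1) → ℝ) (hμ : ∑ j, μ j = 1) (hx : ∑ j, μ j • v j = x)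
    (hle : ∀ j, (1 - σ) / ((n : ℝ) + 1) ≤ μ j) :
    x ∈ homSimplex v σ := by
  set ν : Fin (n + 1) → ℝ := fun j => (μ j - (1 - σ) / ((n : ℝ) + 1)) / σ
  refine ⟨∑ j, ν j • v j, (convex_convexHull ℝ _).sum_mem (fun j _ => ?_) ?_
    (fun j _ => subset_convexHull ℝ _ (Set.mem_range_self j)), ?_⟩
  · exact div_nonneg (sub_nonneg.2 (hle j)) hσ.le
  · simp only [ν, ← Finset.sum_div, Finset.sum_sub_distrib, hμ, Finset.sum_const,
      Finset.card_univ, Fintype.card_fin, nsmul_eq_mul]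
    push_cast
    field_simp
    ring
  · have hσν : σ • ∑ j, ν j • v j = x - (1 - σ) • simplexCentroid v := by
      have h j : σ • ν j • v j = μ j • v j - ((1 - σ) / ((n : ℝ) + 1)) • v j := by
        rw [smul_smul, mul_div_cancel₀ _ hσ.ne', sub_smul]
      rw [Finset.smul_sum, Finset.sum_congr rfl fun j _ => h j, Finset.sum_sub_distrib, hx,
        ← Finset.smul_sum, simplexCentroid, smul_smul, div_eq_mul_inv]
    show simplexCentroid v + σ • (∑ j, ν j • v j - simplexCentroid v) = x
    rw [smul_sub, hσν]
    module

theorem le_coord_of_mem_homSimplex (b : AffineBasis (Fin (n + 1)) ℝ (Fin n → ℝ)) {σ : ℝ}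
    (hσ : 0 ≤ σ) {x : Fin n → ℝ} (hx : x ∈ homSimplex b σ) (j : Fin (n + 1)) :
    (1 - σ) / ((n : ℝ) + 1) ≤ b.coord j x := by
  obtain ⟨y, hy, rfl⟩ := hx
  dsimp only
  have hyj : 0 ≤ b.coord j y := by
    rw [simplexSet, b.convexHull_eq_nonneg_coord] at hy
    exact hy j
  have hline : simplexCentroid b + σ • (y - simplexCentroid b)
      = AffineMap.lineMap (simplexCentroid b) y σ := by
    rw [AffineMap.lineMap_apply_module']
    abel
  rw [hline, AffineMap.apply_lineMap, AffineMap.lineMap_apply_ring, simplexCentroid_eq_centroid,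
    b.coord_apply_centroid (Finset.mem_univ j)]
  simp only [Finset.card_univ, Fintype.card_fin, Nat.cast_add, Nat.cast_one]
  have : 0 ≤ σ * b.coord j y := mul_nonneg hσ hyj
  rw [div_eq_mul_inv]
  linarith

end Homothety

theorem min_zero_le_mul_one_sub {a t : ℝ} (h0 : 0 ≤ t) (h1 : t ≤ 1) :
    min a 0 ≤ a * (1 - t) := by
  rcases le_total a 0 with h | h
  · rw [min_eq_left h]; nlinarith
  · rw [min_eq_right h]; nlinarith

section LowerBound

variable {n : ℕ}

theorem AffineBasis.sum_sum_min_coord_linear_single_le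
    (b : AffineBasis (Fin (n + 1)) ℝ (Fin n → ℝ)) (hb : ∀ j, b j ∈ unitCube n) :
    ∑ j, ∑ i, min ((b.coord j).linear (Pi.single i 1)) 0 ≤ -n := by
  have key i : ∑ j, min ((b.coord j).linear (Pi.single i 1)) 0 ≤ -1 := by
    have h0 := b.sum_coord_linear_apply_eq_zero (Pi.single i 1)
    have h1 := congrFun (b.sum_coord_linear_smul_eq_self (Pi.single i 1)) i
    simp only [Finset.sum_apply, Pi.smul_apply, smul_eq_mul, Pi.single_eq_same] at h1
    calc ∑ j, min ((b.coord j).linear (Pi.single i 1)) 0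
        ≤ ∑ j, (b.coord j).linear (Pi.single i 1) * (1 - b j i) :=
          Finset.sum_le_sum fun j _ => min_zero_le_mul_one_sub (hb j i).1 (hb j i).2
      _ = -1 := by simp only [mul_one_sub, Finset.sum_sub_distrib, h0, h1, zero_sub]
  calc ∑ j, ∑ i, min ((b.coord j).linear (Pi.single i 1)) 0
      = ∑ i, ∑ j, min ((b.coord j).linear (Pi.single i 1)) 0 := Finset.sum_comm
    _ ≤ ∑ _i : Fin n, (-1 : ℝ) := Finset.sum_le_sum fun i _ => key i
    _ = -n := by simp

theorem natCast_le_of_unitCube_subset_homSimplex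
    (b : AffineBasis (Fin (n + 1)) ℝ (Fin n → ℝ)) (hb : ∀ j, b j ∈ unitCube n) {σ : ℝ}
    (hσ : 0 ≤ σ) (hQ : unitCube n ⊆ homSimplex b σ) :
    (n : ℝ) ≤ σ := by
  have hmin j : (1 - σ) / ((n : ℝ) + 1)
      ≤ b.coord j 0 + ∑ i, min ((b.coord j).linear (Pi.single i 1)) 0 := by
    obtain ⟨y, hy, hyj⟩ := (b.coord j).isLeast_image_unitCube.1
    exact hyj ▸ le_coord_of_mem_homSimplex b hσ (hQ hy) j
  have hsum := Finset.sum_le_sum fun j (_ : j ∈ Finset.univ) => hmin j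
  rw [Finset.sum_add_distrib, b.sum_coord_apply_eq_one, Finset.sum_const, Finset.card_univ,
    Fintype.card_fin, nsmul_eq_mul, Nat.cast_add, Nat.cast_one,
    mul_div_cancel₀ _ (by positivity)] at hsum
  linarith [b.sum_sum_min_coord_linear_single_le hb]

theorem exists_unitCube_subset_homSimplex (b : AffineBasis (Fin (n + 1)) ℝ (Fin n → ℝ)) :
    ∃ σ, 1 ≤ σ ∧ unitCube n ⊆ homSimplex b σ := by
  set m : Fin (n + 1) → ℝ := fun j =>
    b.coord j 0 + ∑ i, min ((b.coord j).linear (Pi.single i 1)) 0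
  obtain ⟨M, hM⟩ := Finite.exists_le fun j => 1 - ((n : ℝ) + 1) * m j
  refine ⟨max 1 M, le_max_left _ _, fun x hx => mem_homSimplex_of_sum_smul_eq b
    (by positivity) (b.coord · x) (b.sum_coord_apply_eq_one x)
    (b.linear_combination_coord_eq_self x) fun j => ?_⟩
  calc (1 - max 1 M) / ((n : ℝ) + 1) ≤ m j := by
        rw [div_le_iff₀ (by positivity)]
        linarith [hM j, le_max_right 1 M]
    _ ≤ b.coord j x := (b.coord j).isLeast_image_unitCube.2 ⟨x, hx, rfl⟩

end LowerBound

open Matrix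

theorem Matrix.exists_transpose_mul_eq_smul_one_and_col_eq_one {ι K : Type*} [Fintype ι]
    [DecidableEq ι] [Field K] {H : Matrix ι ι K} (hpm : ∀ i j, H i j = 1 ∨ H i j = -1)
    {c : K} (hc : c ≠ 0) (hH : H * Hᵀ = c • 1) (j₀ : ι) :
    ∃ G : Matrix ι ι K,
      (∀ i j, G i j = 1 ∨ G i j = -1) ∧ (∀ i, G i j₀ = 1) ∧ Gᵀ * G = c • 1 := by
  have hsq i : H i j₀ * H i j₀ = 1 := by rcases hpm i j₀ with h | h <;> simp [h]
  have hHH : Hᵀ * H = c • 1 := by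
    have h : H * (c⁻¹ • Hᵀ) = 1 := by
      rw [Matrix.mul_smul, hH, smul_smul, inv_mul_cancel₀ hc, one_smul]
    rw [← one_smul K (Hᵀ * H), ← mul_inv_cancel₀ hc, mul_smul, ← Matrix.smul_mul,
      mul_eq_one_comm.1 h]
  refine ⟨diagonal (fun i => H i j₀) * H, fun i j => ?_, fun i => ?_, ?_⟩
  · rcases hpm i j₀ with h | h <;> rcases hpm i j with h' | h' <;> simp [h, h']
  · simp [hsq]
  · rw [Matrix.transpose_mul, diagonal_transpose, Matrix.mul_assoc,
      ← Matrix.mul_assoc (diagonal _), diagonal_mul_diagonal, funext hsq, diagonal_one,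
      Matrix.one_mul, hHH]

section HadamardSimplex

variable {n : ℕ} (G : Matrix (Fin (n + 1)) (Fin (n + 1)) ℝ)

noncomputable def hadamardVertex (j : Fin (n + 1)) : Fin n → ℝ :=
  fun i => (1 + G j i.succ) / 2

noncomputable def hadamardWeights (x : Fin n → ℝ) : Fin (n + 1) → ℝ :=
  ((n : ℝ) + 1)⁻¹ • (G *ᵥ Fin.cons 1 fun i => 2 * x i - 1)

variable {G}

theorem transpose_mulVec_hadamardWeights (hGG : Gᵀ * G = ((n : ℝ) + 1) • 1) (x : Fin n → ℝ) :
    Gᵀ *ᵥ hadamardWeights G x = Fin.cons 1 fun i => 2 * x i - 1 := by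
  rw [hadamardWeights, Matrix.mulVec_smul, Matrix.mulVec_mulVec, hGG, Matrix.smul_mulVec,
    Matrix.one_mulVec, smul_smul, inv_mul_cancel₀ (by positivity), one_smul]

theorem sum_hadamardWeights (hG0 : ∀ j, G j 0 = 1) (hGG : Gᵀ * G = ((n : ℝ) + 1) • 1)
    (x : Fin n → ℝ) : ∑ j, hadamardWeights G x j = 1 := by
  simpa [Matrix.mulVec, dotProduct, hG0] using
    congrFun (transpose_mulVec_hadamardWeights hGG x) 0

theorem sum_hadamardWeights_smul (hG0 : ∀ j, G j 0 = 1) (hGG : Gᵀ * G = ((n : ℝ) + 1) • 1)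
    (x : Fin n → ℝ) : ∑ j, hadamardWeights G x j • hadamardVertex G j = x := by
  funext i
  have h := congrFun (transpose_mulVec_hadamardWeights hGG x) i.succ
  simp only [Matrix.mulVec, dotProduct, Matrix.transpose_apply, Fin.cons_succ] at h
  have h1 := sum_hadamardWeights hG0 hGG x
  simp only [Finset.sum_apply, Pi.smul_apply, smul_eq_mul, hadamardVertex, mul_div_assoc',
    mul_add, mul_one, ← Finset.sum_div, Finset.sum_add_distrib, h1]
  simp only [mul_comm (hadamardWeights G x _), h]
  ring

theorem affineIndependent_hadamardVertex (hG0 : ∀ j, G j 0 = 1)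
    (hGG : Gᵀ * G = ((n : ℝ) + 1) • 1) : AffineIndependent ℝ (hadamardVertex G) :=
  affineIndependent_of_forall_eq_sum_smul (by simp) fun x =>
    ⟨_, sum_hadamardWeights hG0 hGG x, sum_hadamardWeights_smul hG0 hGG x⟩

theorem hadamardVertex_mem_unitCube (hpm : ∀ i j, G i j = 1 ∨ G i j = -1) (j : Fin (n + 1)) :
    hadamardVertex G j ∈ unitCube n := fun i => by
  rcases hpm j i.succ with h | h <;> norm_num [hadamardVertex, h]

theorem le_hadamardWeights (hpm : ∀ i j, G i j = 1 ∨ G i j = -1) (hG0 : ∀ j, G j 0 = 1)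
    {x : Fin n → ℝ} (hx : x ∈ unitCube n) (j : Fin (n + 1)) :
    (1 - n) / ((n : ℝ) + 1) ≤ hadamardWeights G x j := by
  have hterm i : -1 ≤ G j i.succ * (2 * x i - 1) := by
    rcases hpm j i.succ with h | h <;> rw [h] <;> linarith [hx i]
  have hsum : -(n : ℝ) ≤ ∑ i, G j i.succ * (2 * x i - 1) := by
    simpa using Finset.sum_le_sum fun i (_ : i ∈ Finset.univ) => hterm i
  simp only [hadamardWeights, Pi.smul_apply, smul_eq_mul, Matrix.mulVec, dotProduct,
    Fin.sum_univ_succ, Fin.cons_zero, Fin.cons_succ, hG0, mul_one, ← div_eq_inv_mul]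
  gcongr
  linarith

theorem unitCube_subset_homSimplex_hadamardVertex (hpm : ∀ i j, G i j = 1 ∨ G i j = -1)
    (hG0 : ∀ j, G j 0 = 1) (hGG : Gᵀ * G = ((n : ℝ) + 1) • 1) :
    unitCube n ⊆ homSimplex (hadamardVertex G) n := by
  rcases Nat.eq_zero_or_pos n with rfl | hn
  · exact fun x _ =>
      ⟨hadamardVertex G 0, subset_convexHull ℝ _ (Set.mem_range_self 0), Subsingleton.elim _ _⟩
  · exact fun x hx => mem_homSimplex_of_sum_smul_eq _ (by exact_mod_cast hn) _
      (sum_hadamardWeights hG0 hGG x) (sum_hadamardWeights_smul hG0 hGG x)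
      (le_hadamardWeights hpm hG0 hx)

end HadamardSimplex

/-- if `n+1` is an Hadamard number then `ξ_n = n`: there is a nondegenerate
simplex `S ⊆ Q_n` with `Q_n ⊆ nS`, and every nondegenerate simplex `T ⊆ Q_n` has `ξ(T) ≥ n`. -/
theorem xi_n_eq_n_of_hadamard {n : ℕ}
    (hH : ∃ H : Matrix (Fin (n + 1)) (Fin (n + 1)) ℝ,
      (∀ i j, H i j = 1 ∨ H i j = -1) ∧ H * H.transpose = ((n : ℝ) + 1) • 1) :
    (∃ v : Fin (n + 1) → (Fin n → ℝ), AffineIndependent ℝ v ∧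
      simplexSet v ⊆ unitCube n ∧ unitCube n ⊆ homSimplex v n) ∧
    (∀ w : Fin (n + 1) → (Fin n → ℝ), AffineIndependent ℝ w →
      simplexSet w ⊆ unitCube n → (n : ℝ) ≤ xiVal w) := by
  obtain ⟨H, hpm, hHH⟩ := hH
  obtain ⟨G, hGpm, hG0, hGG⟩ :=
    exists_transpose_mul_eq_smul_one_and_col_eq_one hpm (by positivity) hHH 0
  refine ⟨⟨hadamardVertex G, affineIndependent_hadamardVertex hG0 hGG,
    convexHull_min (Set.range_subset_iff.2 (hadamardVertex_mem_unitCube hGpm))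
      (convex_unitCube n),
    unitCube_subset_homSimplex_hadamardVertex hGpm hG0 hGG⟩, fun w hw hS => ?_⟩
  let b : AffineBasis (Fin (n + 1)) ℝ (Fin n → ℝ) :=
    ⟨w, hw, hw.affineSpan_eq_top_iff_card_eq_finrank_add_one.2 (by simp)⟩
  have hb j : b j ∈ unitCube n := hS (subset_convexHull ℝ _ (Set.mem_range_self j))
  obtain ⟨σ, hσ⟩ := exists_unitCube_subset_homSimplex b
  exact le_csInf ⟨σ, hσ⟩ fun σ hσ =>
    natCast_le_of_unitCube_subset_homSimplex b hb (zero_le_one.trans hσ.1) hσ.2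
end

section
/- For t ∈ [1/4, 3/4], the simplex T(t) ⊂ R⁷ with vertices (1,0,0,0,0,0,1), (1,0,1,t,1,1,0), (0,1,1,1−t,0,1,1), (0,0,0,t,1,1,0), (0,1,1,1−t,0,0,0), (1,1,0,t,1,1,0), (0,1,1,1−t,1,0,1), (1,0,0,1,0,0,1) is nondegenerate, contained in Q₇ = [0,1]⁷, and satisfies ξ(T(t)) = 7 (so that the simplex 7T(t) is circumscribed around Q₇). -/
open Finset MeasureTheory

/-- The family of simplices `T(t) ⊂ ℝ⁷`. -/
noncomputable def Tverts (t : ℝ) : Fin 8 → (Fin 7 → ℝ) :=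
  ![![1, 0, 0, 0, 0, 0, 1], ![1, 0, 1, t, 1, 1, 0], ![0, 1, 1, 1 - t, 0, 1, 1],
    ![0, 0, 0, t, 1, 1, 0], ![0, 1, 1, 1 - t, 0, 0, 0], ![1, 1, 0, t, 1, 1, 0],
    ![0, 1, 1, 1 - t, 1, 0, 1], ![1, 0, 0, 1, 0, 0, 1]]

/-! The affine functions `λ_j` with `λ_j (v_k) = δ_jk` are the barycentric coordinates of a
simplex `S = conv v`, and `λ_j (c + σ (y - c)) = 1/(n+1) + σ (λ_j y - 1/(n+1))` at the centroid `c`.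
Hence, for `σ > 0`, `x ∈ σS` iff `λ_j x ≥ (1 - σ)/(n+1)` for all `j`, and `ξ(S) = 1 - (n+1) m`
where `m ≤ 0` is the least value of the `λ_j` on the cube.

For `T(t)` the `λ_j` are explicit. Minimizing each one coordinatewise over `Q₇` (the signs of the
`t`-dependent coefficients are fixed by `1/4 ≤ t ≤ 3/4`) gives `λ_j ≥ -3/4`, with equality for `λ_0`
at `(0,1,1,1,1,1,0)`, so `ξ(T(t)) = 1 + 8 · 3/4 = 7`. -/

namespace IsAffinePoly

variable {n : ℕ} {f : (Fin n → ℝ) → ℝ}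

theorem map_sum_smul (hf : IsAffinePoly f) {ι : Type*} (s : Finset ι) (w : ι → ℝ)
    (p : ι → Fin n → ℝ) :
    f (∑ k ∈ s, w k • p k) = ∑ k ∈ s, w k * f (p k) + (1 - ∑ k ∈ s, w k) * f 0 := by
  obtain ⟨a, b, hf⟩ := hf
  replace hf : ∀ x, f x = a ⬝ᵥ x + b := hf
  simp only [hf, dotProduct_sum, dotProduct_smul, dotProduct_zero, smul_eq_mul, mul_add,
    Finset.sum_add_distrib, ← Finset.sum_mul]
  ring

theorem map_add_smul_sub (hf : IsAffinePoly f) (c x : Fin n → ℝ) (s : ℝ) :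
    f (c + s • (x - c)) = f c + s * (f x - f c) := by
  obtain ⟨a, b, hf⟩ := hf
  replace hf : ∀ x, f x = a ⬝ᵥ x + b := hf
  simp only [hf, dotProduct_add, dotProduct_smul, dotProduct_sub, smul_eq_mul]
  ring

end IsAffinePoly

namespace IsLagrangeBasis

variable {n : ℕ} {v : Fin (n + 1) → Fin n → ℝ} {lam : Fin (n + 1) → (Fin n → ℝ) → ℝ}

theorem apply_sum_smul (h : IsLagrangeBasis v lam) (s : Finset (Fin (n + 1)))
    (w : Fin (n + 1) → ℝ) (j : Fin (n + 1)) :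
    lam j (∑ k ∈ s, w k • v k) = (if j ∈ s then w j else 0) + (1 - ∑ k ∈ s, w k) * lam j 0 := by
  rw [(h.1 j).map_sum_smul]
  simp [h.2, Finset.sum_ite_eq]

theorem affineIndependent (h : IsLagrangeBasis v lam) : AffineIndependent ℝ v := by
  rw [affineIndependent_iff_of_fintype]
  intro w hw hv j
  rw [Finset.weightedVSub_eq_linear_combination _ hw] at hv
  simpa [hv, hw] using h.apply_sum_smul Finset.univ w j

theorem exists_eq_sum_smul (h : IsLagrangeBasis v lam) (x : Fin n → ℝ) :
    ∃ w : Fin (n + 1) → ℝ, ∑ k, w k = 1 ∧ x = ∑ k, w k • v k := by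
  have hspan : affineSpan ℝ (Set.range v) = ⊤ :=
    h.affineIndependent.affineSpan_eq_top_iff_card_eq_finrank_add_one.2 (by simp)
  obtain ⟨w, hw, hx⟩ :=
    eq_affineCombination_of_mem_affineSpan_of_fintype (hspan ▸ AffineSubspace.mem_top ℝ _ x)
  exact ⟨w, hw, by rwa [Finset.affineCombination_eq_linear_combination _ _ _ hw] at hx⟩

theorem sum_apply_eq_one (h : IsLagrangeBasis v lam) (x : Fin n → ℝ) : ∑ j, lam j x = 1 := by
  obtain ⟨w, hw, rfl⟩ := h.exists_eq_sum_smul x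
  simp [h.apply_sum_smul, hw]

theorem sum_smul_eq_self (h : IsLagrangeBasis v lam) (x : Fin n → ℝ) :
    ∑ j, lam j x • v j = x := by
  obtain ⟨w, hw, rfl⟩ := h.exists_eq_sum_smul x
  simp [h.apply_sum_smul, hw]

theorem mem_simplexSet_iff (h : IsLagrangeBasis v lam) (x : Fin n → ℝ) :
    x ∈ simplexSet v ↔ ∀ j, 0 ≤ lam j x := by
  constructor
  · rw [simplexSet, convexHull_range_eq_exists_affineCombination]
    rintro ⟨s, w, hw₀, hw₁, rfl⟩ j
    rw [Finset.affineCombination_eq_linear_combination _ _ _ hw₁, h.apply_sum_smul, hw₁]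
    split_ifs with hj <;> simp [hw₀, hj]
  · intro hx
    exact mem_convexHull_of_exists_fintype _ v hx (h.sum_apply_eq_one x) Set.mem_range_self
      (h.sum_smul_eq_self x)

theorem apply_simplexCentroid (h : IsLagrangeBasis v lam) (j : Fin (n + 1)) :
    lam j (simplexCentroid v) = ((n : ℝ) + 1)⁻¹ := by
  rw [simplexCentroid, Finset.smul_sum, h.apply_sum_smul]
  have hn : (n : ℝ) + 1 ≠ 0 := by positivity
  simp [hn]

theorem mem_homSimplex_iff (h : IsLagrangeBasis v lam) {σ : ℝ} (hσ : 0 < σ) (x : Fin n → ℝ) :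
    x ∈ homSimplex v σ ↔ ∀ j, (1 - σ) / ((n : ℝ) + 1) ≤ lam j x := by
  set c := simplexCentroid v
  have hpre : x ∈ homSimplex v σ ↔ c + σ⁻¹ • (x - c) ∈ simplexSet v := by
    constructor
    · rintro ⟨y, hy, rfl⟩
      convert hy using 1
      rw [add_sub_cancel_left, smul_smul, inv_mul_cancel₀ hσ.ne', one_smul, add_sub_cancel]
    · intro hy
      refine ⟨_, hy, ?_⟩
      show c + σ • (c + σ⁻¹ • (x - c) - c) = x
      rw [add_sub_cancel_left, smul_smul, mul_inv_cancel₀ hσ.ne', one_smul, add_sub_cancel]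
  rw [hpre, h.mem_simplexSet_iff]
  refine forall_congr' fun j => ?_
  rw [(h.1 j).map_add_smul_sub, h.apply_simplexCentroid]
  have hn : (n : ℝ) + 1 ≠ 0 := by positivity
  have hrescale : ((n : ℝ) + 1)⁻¹ + σ⁻¹ * (lam j x - ((n : ℝ) + 1)⁻¹) =
      σ⁻¹ * (lam j x - (1 - σ) / ((n : ℝ) + 1)) := by
    field_simp
    ring
  rw [hrescale, mul_nonneg_iff_of_pos_left (inv_pos.2 hσ), sub_nonneg]

theorem xiVal_eq_of_isLeast (h : IsLagrangeBasis v lam) {m : ℝ} (hm : m ≤ 0)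
    (hleast : IsLeast (⋃ j, lam j '' unitCube n) m) :
    xiVal v = 1 - ((n : ℝ) + 1) * m := by
  have hn : (0 : ℝ) < n + 1 := by positivity
  have hmem : 1 - ((n : ℝ) + 1) * m ∈ {σ : ℝ | 1 ≤ σ ∧ unitCube n ⊆ homSimplex v σ} := by
    refine ⟨by nlinarith, fun x hx => (h.mem_homSimplex_iff (by nlinarith) x).2 fun j => ?_⟩
    have hm' : (1 - (1 - ((n : ℝ) + 1) * m)) / ((n : ℝ) + 1) = m := by field_simp; ring
    rw [hm']
    exact hleast.2 (Set.mem_iUnion.2 ⟨j, Set.mem_image_of_mem _ hx⟩)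
  refine le_antisymm (csInf_le ⟨1, fun σ hσ => hσ.1⟩ hmem) (le_csInf ⟨_, hmem⟩ ?_)
  rintro σ ⟨hσ, hcube⟩
  obtain ⟨j, x, hx, hjx⟩ := by simpa only [Set.mem_iUnion, Set.mem_image] using hleast.1
  have hσx := (h.mem_homSimplex_iff (by linarith) x).1 (hcube hx) j
  rw [hjx, div_le_iff₀ hn] at hσx
  linarith

end IsLagrangeBasis

theorem unitCube_eq_Icc (n : ℕ) : unitCube n = Set.Icc 0 1 := by
  ext x
  simp [unitCube, Pi.le_def, forall_and]

theorem sum_min_zero_le_sum_mul {n : ℕ} {x : Fin n → ℝ} (hx : x ∈ unitCube n) (a : Fin n → ℝ) :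
    ∑ i, min (a i) 0 ≤ ∑ i, a i * x i := by
  refine Finset.sum_le_sum fun i _ => ?_
  obtain ⟨hx0, hx1⟩ := hx i
  rcases le_total (a i) 0 with ha | ha
  · rw [min_eq_left ha]
    nlinarith
  · rw [min_eq_right ha]
    positivity

theorem Tverts_mem_unitCube {t : ℝ} (ht : t ∈ Set.Icc (0 : ℝ) 1) (k : Fin 8) :
    Tverts t k ∈ unitCube 7 := by
  obtain ⟨ht0, ht1⟩ := ht
  intro i
  fin_cases k <;> fin_cases i <;> simp [Tverts] <;> constructor <;> linarith

def TLagrangeCoeff (t : ℝ) : Fin 8 → Fin 7 → ℝ :=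
  ![![4 * t - 1, 1 - 4 * t, 1 - 4 * t, -8, 4 * t - 3, 4 * t - 3, 3 - 4 * t],
    ![3, -3, 5, 0, 1, 1, -1],
    ![-1, 1, 1, 0, -3, 5, 3],
    ![-5, -3, -3, 0, 1, 1, -1],
    ![-1, 1, 1, 0, -3, -3, -5],
    ![3, 5, -3, 0, 1, 1, -1],
    ![-1, 1, 1, 0, 5, -3, 3],
    ![3 - 4 * t, 4 * t - 3, 4 * t - 3, 8, 1 - 4 * t, 1 - 4 * t, 4 * t - 1]]

def TLagrangeConst : Fin 8 → ℝ := ![6, -2, -2, 6, 6, -2, -2, -2]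

noncomputable def TLagrange (t : ℝ) (j : Fin 8) (x : Fin 7 → ℝ) : ℝ :=
  (∑ i, TLagrangeCoeff t j i * x i + TLagrangeConst j) / 8

theorem isLagrangeBasis_TLagrange (t : ℝ) : IsLagrangeBasis (Tverts t) (TLagrange t) := by
  refine ⟨fun j => ⟨fun i => TLagrangeCoeff t j i / 8, TLagrangeConst j / 8, fun x => ?_⟩,
    fun j k => ?_⟩
  · simp only [TLagrange, add_div, Finset.sum_div, div_mul_eq_mul_div]
  · fin_cases j <;> fin_cases k <;>
      simp [TLagrange, TLagrangeCoeff, TLagrangeConst, Tverts, Fin.sum_univ_seven] <;> ring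

theorem neg_six_le_sum_min_TLagrangeCoeff {t : ℝ} (ht : t ∈ Set.Icc (1 / 4 : ℝ) (3 / 4))
    (j : Fin 8) : -6 ≤ ∑ i, min (TLagrangeCoeff t j i) 0 + TLagrangeConst j := by
  obtain ⟨ht1, ht3⟩ := ht
  fin_cases j <;> simp [TLagrangeCoeff, TLagrangeConst, Fin.sum_univ_seven, min_def] <;>
    norm_num <;> split_ifs <;> linarith

theorem isLeast_TLagrange {t : ℝ} (ht : t ∈ Set.Icc (1 / 4 : ℝ) (3 / 4)) :
    IsLeast (⋃ j, TLagrange t j '' unitCube 7) (-(3 / 4)) := by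
  constructor
  · refine Set.mem_iUnion.2 ⟨0, ![0, 1, 1, 1, 1, 1, 0], fun i => ?_, ?_⟩
    · fin_cases i <;> norm_num
    · simp [TLagrange, TLagrangeCoeff, TLagrangeConst, Fin.sum_univ_seven]
      ring
  · simp only [lowerBounds, Set.mem_iUnion, Set.mem_image]
    rintro _ ⟨j, x, hx, rfl⟩
    have hcube := sum_min_zero_le_sum_mul hx (TLagrangeCoeff t j)
    have hcoeff := neg_six_le_sum_min_TLagrangeCoeff ht j
    rw [TLagrange, le_div_iff₀ (by norm_num)]
    linarith

/-- for `t ∈ [1/4, 3/4]`, `T(t)` is nondegenerate, contained in `Q₇`, and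
`ξ(T(t)) = 7` (so `7T(t)` is circumscribed around `Q₇`). -/
theorem Tt_extremal (t : ℝ) (ht : t ∈ Set.Icc (1/4 : ℝ) (3/4)) :
    AffineIndependent ℝ (Tverts t) ∧
    simplexSet (Tverts t) ⊆ unitCube 7 ∧
    xiVal (Tverts t) = 7 := by
  have hlag := isLagrangeBasis_TLagrange t
  have ht01 : t ∈ Set.Icc (0 : ℝ) 1 := Set.Icc_subset_Icc (by norm_num) (by norm_num) ht
  refine ⟨hlag.affineIndependent, ?_, ?_⟩
  · exact convexHull_min (Set.range_subset_iff.2 (Tverts_mem_unitCube ht01)) (convex_unitCube 7)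
  · rw [hlag.xiVal_eq_of_isLeast (by norm_num) (isLeast_TLagrange ht)]
    norm_num
end
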